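/- arXiv:2107.02166 — 10 statements merged into one kernel-verified Lean document; each statement's English description precedes it below -/
import Mathlib

section
/- Let X be a compact Hausdorff space and α: X → X a continuous map with essential set X_α. Then α(X_α) = X_α. -/
/-!
Invariance gives `μ (α⁻¹' V) = μ V`, so pulling an open neighbourhood back along `α` shows
`α(X_α) ⊆ X_α`. Conversely, an invariant regular probability measure `μ` is carried by its
support, which lies in `X_α`; hence `α⁻¹' V` is `μ`-null whenever `V` misses `α(X_α)`, and so is
`V` itself. Thus every point of `X_α` lies in the closure of `α(X_α)`, a compact and hence closed
set.
-/

open MeasureTheory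

/-- The essential set of a continuous map `α`: points all of whose open neighborhoods
have positive measure for some `α`-invariant regular Borel probability measure. -/
def essentialSet {X : Type*} [TopologicalSpace X] [MeasurableSpace X] (α : X → X) : Set X :=
  {x : X | ∀ V : Set X, IsOpen V → x ∈ V →
    ∃ μ : Measure X, IsProbabilityMeasure μ ∧ μ.Regular ∧ μ.map α = μ ∧ 0 < μ V}

open Set

section

variable {X : Type*} [TopologicalSpace X] [MeasurableSpace X] {α : X → X}

theorem isClosed_essentialSet (α : X → X) : IsClosed (essentialSet α) := by
  refine isOpen_compl_iff.mp <| isOpen_iff_forall_mem_open.mpr fun x hx => ?_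
  simp only [essentialSet, mem_compl_iff, mem_ofPred_eq, not_forall] at hx
  obtain ⟨V, hV, hxV, hno_measure⟩ := hx
  exact ⟨V, fun y hy hyE => hno_measure (hyE V hV hy), hV, hxV⟩

theorem support_subset_essentialSet {μ : Measure X} [IsProbabilityMeasure μ] [μ.Regular]
    (hμ : μ.map α = μ) : μ.support ⊆ essentialSet α :=
  fun x hx V hV hxV =>
    ⟨μ, inferInstance, inferInstance, hμ, (μ.mem_support_iff_forall x).1 hx V (hV.mem_nhds hxV)⟩

theorem mapsTo_essentialSet [BorelSpace X] (hα : Continuous α) :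
    MapsTo α (essentialSet α) (essentialSet α) := by
  intro x hx V hV hxV
  obtain ⟨μ, hμ, hreg, hinv, hpos⟩ := hx (α ⁻¹' V) (hV.preimage hα) hxV
  refine ⟨μ, hμ, hreg, hinv, ?_⟩
  rwa [← hinv, Measure.map_apply hα.measurable hV.measurableSet]

theorem essentialSet_subset_closure_image [OpensMeasurableSpace X] (hα : Measurable α) :
    essentialSet α ⊆ closure (α '' essentialSet α) := by
  intro x hx
  by_contra hx_out
  have hV : IsOpen (closure (α '' essentialSet α))ᶜ := isClosed_closure.isOpen_compl
  obtain ⟨μ, hμ, hreg, hinv, hpos⟩ := hx _ hV hx_out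
  have hnull : μ (α ⁻¹' (closure (α '' essentialSet α))ᶜ) = 0 := by
    refine measure_mono_null (t := μ.supportᶜ) (fun y hy hy_supp => hy ?_)
      μ.measure_compl_support_of_regular
    exact subset_closure (mem_image_of_mem α (support_subset_essentialSet hinv hy_supp))
  rw [← hinv, Measure.map_apply hα hV.measurableSet] at hpos
  exact hpos.ne' hnull

end

theorem essentialSet_image_eq
    {X : Type*} [TopologicalSpace X] [CompactSpace X] [T2Space X]
    [MeasurableSpace X] [BorelSpace X]
    (α : X → X) (hα : Continuous α) :
    α '' essentialSet α = essentialSet α := by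
  refine (mapsTo_essentialSet hα).image_subset.antisymm ?_
  have hclosed : IsClosed (α '' essentialSet α) :=
    ((isClosed_essentialSet α).isCompact.image hα).isClosed
  simpa only [hclosed.closure_eq] using essentialSet_subset_closure_image hα.measurable
end

section
/- Let X be a compact metric space, α: X → X continuous, and x ∈ X. If for every open neighborhood V of x there exists y ∈ X with limsup_{n→∞} (1/n)·#{0 ≤ k < n : α^k(y) ∈ V} > 0, then x is essential, i.e., every open neighborhood of x has positive measure for some α-invariant Borel probability measure. -/
/-!
Krylov–Bogolyubov along a good subsequence. Shrink `V` to a closed ball `B` around `x` whose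
interior `y` visits with upper density `> c > 0`. In the compact space of probability measures,
the empirical measures of `y` along the times where the visit frequency exceeds `c` have a limit
point `μ`. It is invariant because pushing an empirical measure forward by `α` only changes its
integrals by `O(1/n)`, and by the portmanteau theorem `μ B ≥ c`.
-/

open MeasureTheory Filter Topology Finset
open scoped ENNReal BoundedContinuousFunction Classical

section Empirical

variable {X : Type*} [MeasurableSpace X]

noncomputable def empiricalMeasure (α : X → X) (y : X) (n : ℕ) : Measure X :=
  (n : ℝ≥0∞)⁻¹ • ∑ k ∈ range n, Measure.dirac (α^[k] y)

variable (α : X → X) (y : X)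

lemma isProbabilityMeasure_empiricalMeasure {n : ℕ} (hn : n ≠ 0) :
    IsProbabilityMeasure (empiricalMeasure α y n) := by
  constructor
  simp [empiricalMeasure,
    ENNReal.inv_mul_cancel (Nat.cast_ne_zero.2 hn) (ENNReal.natCast_ne_top n)]

lemma empiricalMeasure_real_apply {s : Set X} (hs : MeasurableSet s) (n : ℕ) :
    (empiricalMeasure α y n).real s = #{k ∈ range n | α^[k] y ∈ s} / n := by
  simp [empiricalMeasure, Measure.real, Measure.dirac_apply' _ hs, Set.indicator_apply,
    Finset.sum_boole, div_eq_inv_mul]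

variable [TopologicalSpace X] [OpensMeasurableSpace X]

lemma integral_empiricalMeasure (f : X →ᵇ ℝ) (n : ℕ) :
    ∫ x, f x ∂empiricalMeasure α y n = (∑ k ∈ range n, f (α^[k] y)) / n := by
  rw [empiricalMeasure, integral_smul_measure, integral_finsetSum_measure
    fun k _ => f.integrable _]
  simp [integral_dirac' _ _ f.continuous.stronglyMeasurable, div_eq_inv_mul]

lemma integral_comp_sub_integral_empiricalMeasure (hα : Continuous α) (f : X →ᵇ ℝ) (n : ℕ) :
    ∫ x, f (α x) ∂empiricalMeasure α y n - ∫ x, f x ∂empiricalMeasure α y n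
      = (f (α^[n] y) - f y) / n := by
  have h := integral_empiricalMeasure α y (f.compContinuous ⟨α, hα⟩) n
  simp only [BoundedContinuousFunction.compContinuous_apply, ContinuousMap.coe_mk] at h
  rw [h, integral_empiricalMeasure, ← sub_div]
  congr 1
  simpa [← Function.iterate_succ_apply' α] using sum_range_sub (fun k => f (α^[k] y)) n

lemma tendsto_integral_comp_sub_integral_empiricalMeasure (hα : Continuous α) (f : X →ᵇ ℝ) :
    Tendsto (fun n => ∫ x, f (α x) ∂empiricalMeasure α y n - ∫ x, f x ∂empiricalMeasure α y n)
      atTop (𝓝 0) := by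
  simp_rw [integral_comp_sub_integral_empiricalMeasure α y hα]
  refine squeeze_zero_norm (fun n => ?_) (tendsto_const_div_atTop_nhds_zero_nat (2 * ‖f‖))
  rw [norm_div, RCLike.norm_natCast]
  gcongr
  exact f.dist_le_two_norm _ _

end Empirical

lemma exists_ultrafilter_tendsto_of_frequently {ι Y : Type*} [TopologicalSpace Y] [CompactSpace Y]
    {l : Filter ι} {p : ι → Prop} (hp : ∃ᶠ i in l, p i) (u : ι → Y) :
    ∃ (L : Ultrafilter ι) (z : Y), ↑L ≤ l ∧ (∀ᶠ i in L, p i) ∧ Tendsto u L (𝓝 z) := by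
  have := frequently_iff_neBot.1 hp
  obtain ⟨L, hL⟩ := Ultrafilter.exists_le (l ⊓ 𝓟 {i | p i})
  obtain ⟨z, -, hz⟩ := isCompact_univ.ultrafilter_le_nhds (L.map u) (by simp)
  exact ⟨L, z, hL.trans inf_le_left, hL (mem_inf_of_right (mem_principal_self _)), hz⟩

namespace MeasureTheory.ProbabilityMeasure

variable {X ι : Type*} [MeasurableSpace X] [TopologicalSpace X] [HasOuterApproxClosed X]
  [BorelSpace X] {L : Filter ι} {ν : ι → ProbabilityMeasure X} {μ : ProbabilityMeasure X}

lemma map_eq_of_tendsto_of_tendsto_integral_comp_sub {α : X → X} (hα : Continuous α) [L.NeBot]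
    (hνμ : Tendsto ν L (𝓝 μ))
    (hν : ∀ f : X →ᵇ ℝ, Tendsto (fun i => ∫ x, f (α x) ∂ν i - ∫ x, f x ∂ν i) L (𝓝 0)) :
    (μ : Measure X).map α = μ := by
  refine ext_of_forall_integral_eq_of_IsFiniteMeasure fun f => ?_
  rw [integral_map hα.aemeasurable f.continuous.aestronglyMeasurable]
  have hlim := tendsto_iff_forall_integral_tendsto.1 hνμ
  refine tendsto_nhds_unique (hlim (f.compContinuous ⟨α, hα⟩)) ?_
  simpa using (hlim f).add (hν f)

lemma le_measure_of_tendsto_of_frequently_le (hνμ : Tendsto ν L (𝓝 μ)) {F : Set X}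
    (hF : IsClosed F) {c : ℝ≥0∞} (hc : ∃ᶠ i in L, c ≤ (ν i : Measure X) F) :
    c ≤ (μ : Measure X) F :=
  (le_limsup_of_frequently_le' hc).trans (limsup_measure_closed_le_of_tendsto hνμ hF)

end MeasureTheory.ProbabilityMeasure

lemma exists_pos_frequently_lt_succ_of_limsup_pos {u : ℕ → ℝ} (hu : ∀ n, 0 ≤ u n)
    (h : 0 < limsup u atTop) : ∃ c > 0, ∃ᶠ n in atTop, c < u (n + 1) := by
  obtain ⟨c, hc, hcu⟩ : ∃ c > 0, c < limsup u atTop := ⟨_, half_pos h, half_lt_self h⟩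
  have hfreq := frequently_lt_of_lt_limsup (isCoboundedUnder_le_of_le atTop hu) hcu
  rw [← map_add_atTop_eq_nat 1] at hfreq
  exact ⟨c, hc, frequently_map.1 hfreq⟩

theorem essential_of_limsup_empirical_pos
    {X : Type*} [MetricSpace X] [CompactSpace X]
    [MeasurableSpace X] [BorelSpace X]
    (α : X → X) (hα : Continuous α) (x : X)
    (h : ∀ V : Set X, IsOpen V → x ∈ V → ∃ y : X,
      0 < limsup (fun n : ℕ =>
        (((Finset.range n).filter (fun k => α^[k] y ∈ V)).card : ℝ) / (n : ℝ)) atTop) :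
    ∀ V : Set X, IsOpen V → x ∈ V →
      ∃ μ : Measure X, IsProbabilityMeasure μ ∧ μ.map α = μ ∧ 0 < μ V := by
  intro V hV hxV
  obtain ⟨r, hr, hrV⟩ := Metric.nhds_basis_closedBall.mem_iff.1 (hV.mem_nhds hxV)
  obtain ⟨y, hy⟩ := h _ Metric.isOpen_ball (Metric.mem_ball_self hr)
  obtain ⟨c, hc, hfreq⟩ := exists_pos_frequently_lt_succ_of_limsup_pos (fun n => by positivity) hy
  -- shifted by one, since the empirical measure at time `0` is the zero measure
  let ν (n : ℕ) : ProbabilityMeasure X :=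
    ⟨empiricalMeasure α y (n + 1), isProbabilityMeasure_empiricalMeasure α y n.succ_ne_zero⟩
  obtain ⟨L, μ, hL, hLc, hνμ⟩ := exists_ultrafilter_tendsto_of_frequently hfreq ν
  refine ⟨μ, inferInstance, ProbabilityMeasure.map_eq_of_tendsto_of_tendsto_integral_comp_sub hα
    hνμ fun f => ((tendsto_integral_comp_sub_integral_empiricalMeasure α y hα f).comp
      (tendsto_add_atTop_nat 1)).mono_left hL, ?_⟩
  have hμ : ENNReal.ofReal c ≤ (μ : Measure X) (Metric.closedBall x r) := by
    refine ProbabilityMeasure.le_measure_of_tendsto_of_frequently_le hνμ Metric.isClosed_closedBall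
      (hLc.frequently.mono fun n hn => ?_)
    rw [← empiricalMeasure_real_apply α y Metric.isOpen_ball.measurableSet] at hn
    exact (ENNReal.ofReal_le_of_le_toReal hn.le).trans (measure_mono Metric.ball_subset_closedBall)
  exact (ENNReal.ofReal_pos.2 hc).trans_le (hμ.trans (measure_mono hrV))
end

section
/- Let X be a compact metric space, α: X → X continuous, and x ∈ X an essential point. Then for every open neighborhood V of x there exists y ∈ X with liminf_{n→∞} (1/n)·#{0 ≤ k < n : α^k(y) ∈ V} > 0. -/
/-!
Take an invariant probability measure `μ` with `μ V > 0` and put `c = μ V / 2`. If every orbit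
visited `V` fewer than `n * c` times among its first `n` iterates for some `n`, every point would
have a positive Birkhoff sum of `c - 𝟙_V`, and the maximal ergodic theorem would give
`∫ (c - 𝟙_V) dμ ≥ 0`, i.e. `μ V ≤ c`. Hence some orbit makes at least `n * c` visits in its
first `n` steps for every `n`, and its visit frequencies have `liminf ≥ c`.
-/

open MeasureTheory Filter Finset
open scoped Classical

section BirkhoffSum

variable {X : Type*} {f : X → X} {g : X → ℝ}

lemma birkhoffSum_const (f : X → X) (c : ℝ) (n : ℕ) (x : X) :
    birkhoffSum f (fun _ => c) n x = n * c := by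
  simp [birkhoffSum]

lemma birkhoffSum_indicator_one (f : X → X) (s : Set X) (n : ℕ) (x : X) :
    birkhoffSum f (s.indicator 1) n x = (#{k ∈ range n | f^[k] x ∈ s} : ℝ) := by
  simp [birkhoffSum, Set.indicator_apply, sum_boole]

noncomputable def maxBirkhoffSum (f : X → X) (g : X → ℝ) (N : ℕ) (x : X) : ℝ :=
  (range (N + 1)).sup' nonempty_range_add_one fun n => birkhoffSum f g n x

lemma birkhoffSum_le_maxBirkhoffSum {n N : ℕ} (hn : n ≤ N) (x : X) :
    birkhoffSum f g n x ≤ maxBirkhoffSum f g N x :=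
  le_sup' (fun n => birkhoffSum f g n x) (mem_range_succ_iff.mpr hn)

lemma maxBirkhoffSum_nonneg (N : ℕ) (x : X) : 0 ≤ maxBirkhoffSum f g N x := by
  simpa using birkhoffSum_le_maxBirkhoffSum (f := f) (g := g) N.zero_le x

lemma monotone_maxBirkhoffSum (x : X) : Monotone fun N => maxBirkhoffSum f g N x := by
  intro M N hMN
  exact sup'_le _ _ fun n hn =>
    birkhoffSum_le_maxBirkhoffSum ((mem_range_succ_iff.mp hn).trans hMN) x

/-- Garsia's pointwise inequality; it needs the empty sum (`n = 0`) among the maxima. -/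
lemma maxBirkhoffSum_le_add_maxBirkhoffSum_apply {N : ℕ} {x : X}
    (hx : 0 < maxBirkhoffSum f g N x) :
    maxBirkhoffSum f g N x ≤ g x + maxBirkhoffSum f g N (f x) := by
  obtain ⟨n, hn, hmax⟩ := exists_mem_eq_sup' nonempty_range_add_one fun n => birkhoffSum f g n x
  change maxBirkhoffSum f g N x = _ at hmax
  rcases n with _ | m
  · simp [hmax] at hx
  · rw [hmax, birkhoffSum_succ']
    gcongr
    exact birkhoffSum_le_maxBirkhoffSum (Nat.le_of_succ_le (mem_range_succ_iff.mp hn)) _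

variable [MeasurableSpace X] {μ : Measure X}

lemma integrable_birkhoffSum (hf : MeasurePreserving f μ μ) (hg : Integrable g μ) (n : ℕ) :
    Integrable (birkhoffSum f g n) μ := by
  unfold birkhoffSum
  exact integrable_finsetSum _ fun k _ => (hf.iterate k).integrable_comp_of_integrable hg

lemma integrable_maxBirkhoffSum (hf : MeasurePreserving f μ μ) (hg : Integrable g μ) (N : ℕ) :
    Integrable (maxBirkhoffSum f g N) μ := by
  have := sup'_induction (s := range (N + 1)) nonempty_range_add_one
    (fun n => birkhoffSum f g n) (p := fun φ => Integrable φ μ)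
    (fun _ h₁ _ h₂ => h₁.sup h₂) fun n _ => integrable_birkhoffSum hf hg n
  convert this using 1
  ext x
  simp [maxBirkhoffSum, Finset.sup'_apply]

-- The maximal ergodic theorem.
lemma setIntegral_nonneg_of_maxBirkhoffSum_pos (hf : MeasurePreserving f μ μ)
    (hg : Integrable g μ) (N : ℕ) :
    0 ≤ ∫ x in {x | 0 < maxBirkhoffSum f g N x}, g x ∂μ := by
  set M := maxBirkhoffSum f g N
  set A := {x | 0 < M x}
  have hM : Integrable M μ := integrable_maxBirkhoffSum hf hg N
  have hMf : Integrable (M ∘ f) μ := hf.integrable_comp_of_integrable hM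
  have hA : NullMeasurableSet A μ := nullMeasurableSet_lt aemeasurable_const hM.1.aemeasurable
  have hMf_int : ∫ x, M (f x) ∂μ = ∫ x, M x ∂μ := by
    rw [← integral_map hf.measurable.aemeasurable (by rw [hf.map_eq]; exact hM.1), hf.map_eq]
  calc 0 = ∫ x, M x ∂μ - ∫ x, M (f x) ∂μ := by rw [hMf_int, sub_self]
    _ ≤ ∫ x in A, M x ∂μ - ∫ x in A, M (f x) ∂μ := by
        refine sub_le_sub (setIntegral_eq_integral_of_forall_compl_eq_zero fun x hx =>
          le_antisymm (not_lt.mp hx) (maxBirkhoffSum_nonneg N x)).ge ?_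
        exact setIntegral_le_integral hMf (ae_of_all _ fun x => maxBirkhoffSum_nonneg N (f x))
    _ = ∫ x in A, (M x - M (f x)) ∂μ := (integral_sub hM.integrableOn hMf.integrableOn).symm
    _ ≤ ∫ x in A, g x ∂μ := by
        refine setIntegral_mono_ae_restrict (hM.sub hMf).integrableOn hg.integrableOn ?_
        filter_upwards [ae_restrict_mem₀ hA] with x hx
        linarith [maxBirkhoffSum_le_add_maxBirkhoffSum_apply (f := f) (g := g) hx]

lemma integral_nonneg_of_forall_exists_birkhoffSum_pos (hf : MeasurePreserving f μ μ)
    (hg : Integrable g μ) (hpos : ∀ x, ∃ n, 0 < birkhoffSum f g n x) :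
    0 ≤ ∫ x, g x ∂μ := by
  set A := fun N => {x | 0 < maxBirkhoffSum f g N x}
  have hA : ∀ N, NullMeasurableSet (A N) μ := fun N =>
    nullMeasurableSet_lt aemeasurable_const (integrable_maxBirkhoffSum hf hg N).1.aemeasurable
  have hA_mono : Monotone A := fun M N hMN x hx =>
    hx.trans_le (monotone_maxBirkhoffSum x hMN)
  have hA_univ : ⋃ N, A N = Set.univ := Set.eq_univ_of_forall fun x =>
    let ⟨n, hn⟩ := hpos x
    Set.mem_iUnion.mpr ⟨n, hn.trans_le (birkhoffSum_le_maxBirkhoffSum le_rfl x)⟩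
  have hlim :=
    tendsto_setIntegral_of_monotone₀ hA hA_mono (by rw [hA_univ]; exact hg.integrableOn)
  rw [hA_univ, setIntegral_univ] at hlim
  exact ge_of_tendsto' hlim fun N => setIntegral_nonneg_of_maxBirkhoffSum_pos hf hg N

lemma exists_forall_mul_le_birkhoffSum [IsProbabilityMeasure μ] (hf : MeasurePreserving f μ μ)
    (hg : Integrable g μ) {c : ℝ} (hc : c < ∫ x, g x ∂μ) :
    ∃ x, ∀ n : ℕ, n * c ≤ birkhoffSum f g n x := by
  by_contra! h
  have hpos (x : X) : ∃ n, 0 < birkhoffSum f ((fun _ => c) - g) n x := by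
    obtain ⟨n, hn⟩ := h x
    exact ⟨n, by rw [birkhoffSum_sub, birkhoffSum_const]; linarith⟩
  have := integral_nonneg_of_forall_exists_birkhoffSum_pos hf ((integrable_const c).sub hg) hpos
  rw [Pi.sub_def, integral_sub (integrable_const c) hg, integral_const, probReal_univ,
    one_smul] at this
  linarith

end BirkhoffSum

lemma le_liminf_card_filter_range_div {p : ℕ → Prop} {c : ℝ}
    (h : ∀ n : ℕ, n * c ≤ #{k ∈ range n | p k}) :
    c ≤ liminf (fun n : ℕ => (#{k ∈ range n | p k} : ℝ) / n) atTop := by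
  have hle_one (n : ℕ) : (#{k ∈ range n | p k} : ℝ) / n ≤ 1 :=
    div_le_one_of_le₀ (by exact_mod_cast (card_filter_le _ _).trans (card_range n).le)
      n.cast_nonneg
  refine le_liminf_of_le (isCoboundedUnder_ge_of_le _ hle_one) ?_
  filter_upwards [eventually_gt_atTop 0] with n hn
  rw [le_div_iff₀ (by positivity)]
  linarith [h n]

theorem liminf_empirical_pos_of_essential_general
    {X : Type*} [MetricSpace X]
    [MeasurableSpace X] [BorelSpace X]
    (α : X → X) (hα : Continuous α) (x : X)
    (hx : ∀ V : Set X, IsOpen V → x ∈ V →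
      ∃ μ : Measure X, IsProbabilityMeasure μ ∧ μ.map α = μ ∧ 0 < μ V) :
    ∀ V : Set X, IsOpen V → x ∈ V → ∃ y : X,
      0 < liminf (fun n : ℕ =>
        (((Finset.range n).filter (fun k => α^[k] y ∈ V)).card : ℝ) / (n : ℝ)) atTop := by
  intro V hV hxV
  obtain ⟨μ, hμ, hmap, hμV⟩ := hx V hV hxV
  have hV_pos : 0 < μ.real V := ENNReal.toReal_pos hμV.ne' (measure_ne_top μ V)
  have hint : ∫ y, V.indicator 1 y ∂μ = μ.real V := integral_indicator_one hV.measurableSet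
  obtain ⟨y, hy⟩ := exists_forall_mul_le_birkhoffSum (g := V.indicator 1)
    ⟨hα.measurable, hmap⟩ ((integrable_const 1).indicator hV.measurableSet)
    (c := μ.real V / 2) (by linarith)
  refine ⟨y, (half_pos hV_pos).trans_le (le_liminf_card_filter_range_div fun n => ?_)⟩
  simpa [birkhoffSum_indicator_one] using hy n

theorem liminf_empirical_pos_of_essential
    {X : Type*} [MetricSpace X] [CompactSpace X]
    [MeasurableSpace X] [BorelSpace X]
    (α : X → X) (hα : Continuous α) (x : X)
    (hx : ∀ V : Set X, IsOpen V → x ∈ V →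
      ∃ μ : Measure X, IsProbabilityMeasure μ ∧ μ.map α = μ ∧ 0 < μ V) :
    ∀ V : Set X, IsOpen V → x ∈ V → ∃ y : X,
      0 < liminf (fun n : ℕ =>
        (((Finset.range n).filter (fun k => α^[k] y ∈ V)).card : ℝ) / (n : ℝ)) atTop :=
  liminf_empirical_pos_of_essential_general α hα x hx
end

section
/- Let X be a compact metric space and α: X → X a local homeomorphism. Then there exists ε > 0 such that for every n ∈ ℕ and every x ∈ X, the preimage set α^{-n}(x) is (n,ε)-separated, i.e., for any distinct u,v ∈ α^{-n}(x) there exists 0 ≤ i < n with d(α^i(u), α^i(v)) > ε. -/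
/-! A locally injective map on a compact space is injective at some uniform scale `δ` (Lebesgue
number lemma). Hence two points with the same image under `α^[n]` whose orbits stay `δ`-close for
the first `n` steps can be peeled apart one step at a time: if `α^[k+1] u = α^[k+1] v`, then
`α^[k] u` and `α^[k] v` are close with equal images, so they coincide. -/

open Metric

theorem IsLocallyInjective.exists_pos_eq_of_dist_lt {X Y : Type*} [PseudoMetricSpace X]
    [CompactSpace X] {f : X → Y} (hf : IsLocallyInjective f) :
    ∃ δ > 0, ∀ u v, dist u v < δ → f u = f v → u = v := by
  choose U hU_open hU_mem hU_inj using hf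
  obtain ⟨δ, hδ, hball⟩ := lebesgue_number_lemma_of_metric isCompact_univ hU_open
    (fun x _ => Set.mem_iUnion.2 ⟨x, hU_mem x⟩)
  refine ⟨δ, hδ, fun u v huv hfuv => ?_⟩
  obtain ⟨y, hy⟩ := hball u trivial
  exact hU_inj y (hy (mem_ball_self hδ)) (hy (mem_ball'.2 huv)) hfuv

theorem Function.eq_of_iterate_eq_of_forall_dist_lt {X : Type*} [PseudoMetricSpace X]
    {f : X → X} {δ : ℝ} (hf : ∀ u v, dist u v < δ → f u = f v → u = v) :
    ∀ (n : ℕ) (u v : X), f^[n] u = f^[n] v →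
      (∀ i < n, dist (f^[i] u) (f^[i] v) < δ) → u = v := by
  intro n
  induction n with
  | zero => exact fun u v h _ => h
  | succ n ih =>
    intro u v h hclose
    have hfuv : f u = f v :=
      ih (f u) (f v) h fun i hi => by simpa only [iterate_succ_apply] using hclose (i + 1) (by omega)
    exact hf u v (hclose 0 n.succ_pos) hfuv

theorem preimages_separated
    {X : Type*} [MetricSpace X] [CompactSpace X]
    (α : X → X) (hα : IsLocalHomeomorph α) :
    ∃ ε > (0 : ℝ), ∀ (n : ℕ) (x u v : X), α^[n] u = x → α^[n] v = x → u ≠ v →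
      ∃ i < n, ε < dist (α^[i] u) (α^[i] v) := by
  obtain ⟨δ, hδ, hinj⟩ := hα.isLocallyInjective.exists_pos_eq_of_dist_lt
  refine ⟨δ / 2, half_pos hδ, fun n x u v hu hv huv => ?_⟩
  by_contra! hclose
  exact huv (Function.eq_of_iterate_eq_of_forall_dist_lt hinj n u v (hu.trans hv.symm)
    fun i hi => (hclose i hi).trans_lt (half_lt_self hδ))
end

section
/- Let X be a compact metric space and α: X → X a non-contracting open local homeomorphism. Then there exists ε > 0 such that whenever x, y ∈ X satisfy d(x, α(y)) < ε, there exists z ∈ α^{-1}(x) with d(z, y) ≤ d(x, α(y)). -/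
/-! An open map makes `α '' ball y r` a neighbourhood of `α y`; compactness of `X` makes its
radius uniform in `y`, so every `x` close to `α y` has a preimage `z` within `r` of `y`. On that
scale `α` does not contract, whence `dist z y ≤ dist (α z) (α y) = dist x (α y)`. -/

open Set Metric Filter Topology

namespace IsOpenMap

variable {X Y : Type*} [PseudoMetricSpace X] [PseudoMetricSpace Y] {f : X → Y}

theorem eventually_ball_subset_image_ball (hf : IsOpenMap f) (hc : Continuous f) {ρ : ℝ}
    (hρ : 0 < ρ) (y₀ : X) :
    ∀ᶠ p : ℝ × X in 𝓝 (0, y₀), ball (f p.2) p.1 ⊆ f '' ball p.2 ρ := by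
  obtain ⟨e, he, hsub⟩ := Metric.isOpen_iff.1 (hf _ isOpen_ball) (f y₀)
    (mem_image_of_mem f (mem_ball_self (half_pos hρ)))
  have hε : ∀ᶠ p : ℝ × X in 𝓝 (0, y₀), p.1 < e / 2 :=
    (continuous_fst.tendsto _).eventually_mem (gt_mem_nhds (half_pos he))
  have hy : ∀ᶠ p : ℝ × X in 𝓝 (0, y₀), p.2 ∈ ball y₀ (ρ / 2) :=
    (continuous_snd.tendsto _).eventually_mem (ball_mem_nhds y₀ (half_pos hρ))
  have hfy : ∀ᶠ p : ℝ × X in 𝓝 (0, y₀), f p.2 ∈ ball (f y₀) (e / 2) :=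
    ((hc.comp continuous_snd).tendsto _).eventually_mem (ball_mem_nhds (f y₀) (half_pos he))
  filter_upwards [hε, hy, hfy] with p hε hy hfy x hx
  have hx₀ : dist x (f y₀) < e := by
    linarith [dist_triangle x (f p.2) (f y₀), mem_ball.1 hx, mem_ball.1 hfy]
  obtain ⟨z, hz, rfl⟩ := hsub hx₀
  refine ⟨z, mem_ball.2 ?_, rfl⟩
  linarith [dist_triangle z y₀ p.2, mem_ball.1 hz, mem_ball'.1 hy]

theorem exists_ball_subset_image_ball [CompactSpace X] (hf : IsOpenMap f) (hc : Continuous f)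
    {ρ : ℝ} (hρ : 0 < ρ) : ∃ ε > 0, ∀ y, ball (f y) ε ⊆ f '' ball y ρ := by
  have h : ∀ᶠ ε in 𝓝 (0 : ℝ), ∀ y ∈ univ, ball (f y) ε ⊆ f '' ball y ρ :=
    isCompact_univ.eventually_forall_of_forall_eventually fun y₀ _ ↦
      hf.eventually_ball_subset_image_ball hc hρ y₀
  obtain ⟨ε, hε, hε₀⟩ :=
    ((h.filter_mono (nhdsWithin_le_nhds (s := Ioi 0))).and self_mem_nhdsWithin).exists
  exact ⟨ε, hε₀, fun y ↦ hε y trivial⟩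

end IsOpenMap

theorem lifting_of_close_points_general
    {X : Type*} [MetricSpace X] [CompactSpace X]
    (α : X → X) (hα : IsLocalHomeomorph α)
    (hnc : ∃ r > (0 : ℝ), ∀ x y : X, dist x y ≤ r → dist x y ≤ dist (α x) (α y)) :
    ∃ ε > (0 : ℝ), ∀ x y : X, dist x (α y) < ε →
      ∃ z : X, α z = x ∧ dist z y ≤ dist x (α y) := by
  obtain ⟨r, hr, hnc⟩ := hnc
  obtain ⟨ε, hε, hball⟩ := hα.isOpenMap.exists_ball_subset_image_ball hα.continuous hr
  refine ⟨ε, hε, fun x y hxy ↦ ?_⟩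
  obtain ⟨z, hz, rfl⟩ := hball y hxy
  exact ⟨z, rfl, hnc z y (mem_ball.1 hz).le⟩

theorem lifting_of_close_points
    {X : Type*} [MetricSpace X] [CompactSpace X]
    (α : X → X) (hα : IsLocalHomeomorph α) (hopen : IsOpenMap α)
    (hnc : ∃ r > (0 : ℝ), ∀ x y : X, dist x y ≤ r → dist x y ≤ dist (α x) (α y)) :
    ∃ ε > (0 : ℝ), ∀ x y : X, dist x (α y) < ε →
      ∃ z : X, α z = x ∧ dist z y ≤ dist x (α y) :=
  lifting_of_close_points_general α hα hnc
end

section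
/- Let X be a compact Hausdorff space, α: X → X continuous, and A: C(X) → C(X) a positive linear operator satisfying A((f∘α)·g) = f·Ag for all f,g ∈ C(X). For x ∈ X define φ_x := A*δ_x. If [A1](x) ≠ 0 then the measure ν_x corresponding to φ_x satisfies supp ν_x ⊆ α^{-1}(x). -/
/-! If `α z ≠ x`, take an Urysohn function `f` with `f x = 0` and `f (α z) = 1`. The homological
identity gives `∫ f ∘ α dν = A (f ∘ α) x = f x * A 1 x = 0`, so the nonnegative `f ∘ α` vanishes
`ν`-a.e., yet it is positive on an open neighbourhood of `z`, which therefore has measure zero. -/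

open MeasureTheory

theorem measure_support_eq_zero_of_integral_eq_zero {Ω : Type*} [MeasurableSpace Ω]
    {μ : Measure Ω} {f : Ω → ℝ} (hf : 0 ≤ f) (hfi : Integrable f μ) (h : ∫ y, f y ∂μ = 0) :
    μ (Function.support f) = 0 := by
  simpa [h] using (integral_pos_iff_support_of_nonneg hf hfi).not

theorem transfer_comp_eq_mul_one {X : Type*} [TopologicalSpace X] {α : X → X}
    (hα : Continuous α) (A : C(X, ℝ) →ₗ[ℝ] C(X, ℝ))
    (hhom : ∀ f g : C(X, ℝ), A ((f.comp ⟨α, hα⟩) * g) = f * A g) (f : C(X, ℝ)) :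
    A (f.comp ⟨α, hα⟩) = f * A 1 := by
  simpa using hhom f 1

theorem support_of_transfer_functional_subset_fiber_general
    {X : Type*} [TopologicalSpace X] [CompactSpace X] [T2Space X]
    [MeasurableSpace X] [BorelSpace X]
    (α : X → X) (hα : Continuous α)
    (A : C(X, ℝ) →ₗ[ℝ] C(X, ℝ))
    (hhom : ∀ f g : C(X, ℝ), A ((f.comp ⟨α, hα⟩) * g) = f * A g)
    (x : X)
    -- `ν` is the regular Borel measure representing the functional `φ_x = A* δ_x`
    (ν : Measure X) (hreg : ν.Regular)
    (hrepr : ∀ f : C(X, ℝ), ∫ y, f y ∂ν = A f x) :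
    {z : X | ∀ V : Set X, IsOpen V → z ∈ V → 0 < ν V} ⊆ α ⁻¹' {x} := by
  intro z hz
  by_contra hzx
  obtain ⟨f, hfx, hfz, hf01⟩ := exists_continuous_zero_one_of_isClosed isClosed_singleton
    isClosed_singleton (Set.disjoint_singleton.mpr hzx).symm
  set g : C(X, ℝ) := f.comp ⟨α, hα⟩
  have hg_int : ∫ y, g y ∂ν = 0 := by
    rw [hrepr, transfer_comp_eq_mul_one hα A hhom, ContinuousMap.mul_apply, hfx rfl, Pi.zero_apply, zero_mul]
  have hg_null : ν (Function.support g) = 0 :=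
    measure_support_eq_zero_of_integral_eq_zero (fun y ↦ (hf01 (α y)).1)
      (g.continuous.integrable_of_hasCompactSupport (.of_compactSpace _)) hg_int
  have hz_supp : z ∈ Function.support g := by simp [g, hfz rfl]
  exact (hz _ g.continuous.isOpen_support hz_supp).ne' hg_null

theorem support_of_transfer_functional_subset_fiber
    {X : Type*} [TopologicalSpace X] [CompactSpace X] [T2Space X]
    [MeasurableSpace X] [BorelSpace X]
    (α : X → X) (hα : Continuous α)
    (A : C(X, ℝ) →ₗ[ℝ] C(X, ℝ))
    (hpos : ∀ f : C(X, ℝ), 0 ≤ f → 0 ≤ A f)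
    (hhom : ∀ f g : C(X, ℝ), A ((f.comp ⟨α, hα⟩) * g) = f * A g)
    (x : X) (hx : A 1 x ≠ 0)
    -- `ν` is the regular Borel measure representing the functional `φ_x = A* δ_x`
    (ν : Measure X) (hreg : ν.Regular)
    (hrepr : ∀ f : C(X, ℝ), ∫ y, f y ∂ν = A f x) :
    {z : X | ∀ V : Set X, IsOpen V → z ∈ V → 0 < ν V} ⊆ α ⁻¹' {x} :=
  support_of_transfer_functional_subset_fiber_general α hα A hhom x ν hreg hrepr
end

section
/- Let X be a compact Hausdorff space, α: X → X a homeomorphism, and A: C(X) → C(X) a transfer operator (positive, satisfying A((f∘α)g) = f·Ag). Then there exists a nonnegative ρ ∈ C(X) such that Af(x) = ρ(α^{-1}(x))·f(α^{-1}(x)) for all f ∈ C(X) and x ∈ X. -/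
theorem ContinuousMap.apply_eq_comp_symm_mul_apply_one {X R : Type*} [TopologicalSpace X]
    [TopologicalSpace R] [MulOneClass R] [ContinuousMul R] (α : X ≃ₜ X)
    (A : C(X, R) → C(X, R))
    (hhom : ∀ f g : C(X, R), A ((f.comp (α : C(X, X))) * g) = f * A g) (f : C(X, R)) :
    A f = f.comp (α.symm : C(X, X)) * A 1 := by
  have hf : (f.comp (α.symm : C(X, X))).comp (α : C(X, X)) * 1 = f := by
    ext; simp
  rw [← hhom, hf]

theorem transfer_operator_of_homeomorph_is_weighted_shift_general
    {X : Type*} [TopologicalSpace X]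
    (α : X ≃ₜ X)
    (A : C(X, ℝ) →ₗ[ℝ] C(X, ℝ))
    (hpos : ∀ f : C(X, ℝ), 0 ≤ f → 0 ≤ A f)
    (hhom : ∀ f g : C(X, ℝ), A ((f.comp (α : C(X, X))) * g) = f * A g) :
    ∃ ρ : C(X, ℝ), 0 ≤ ρ ∧ ∀ (f : C(X, ℝ)) (x : X),
      A f x = ρ (α.symm x) * f (α.symm x) := by
  refine ⟨(A 1).comp (α : C(X, X)), fun x => hpos 1 zero_le_one (α x), fun f x => ?_⟩
  rw [ContinuousMap.apply_eq_comp_symm_mul_apply_one α A hhom f]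
  simp [mul_comm]

theorem transfer_operator_of_homeomorph_is_weighted_shift
    {X : Type*} [TopologicalSpace X] [CompactSpace X] [T2Space X]
    (α : X ≃ₜ X)
    (A : C(X, ℝ) →ₗ[ℝ] C(X, ℝ))
    (hpos : ∀ f : C(X, ℝ), 0 ≤ f → 0 ≤ A f)
    (hhom : ∀ f g : C(X, ℝ), A ((f.comp (α : C(X, X))) * g) = f * A g) :
    ∃ ρ : C(X, ℝ), 0 ≤ ρ ∧ ∀ (f : C(X, ℝ)) (x : X),
      A f x = ρ (α.symm x) * f (α.symm x) :=
  transfer_operator_of_homeomorph_is_weighted_shift_general α A hpos hhom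
end

section
/- Let X be a compact Hausdorff space, α: X → X continuous with sup_{x∈X} |α^{-1}(x)| < ∞, and A: C(X) → C(X) a transfer operator given by [Af](x) = Σ_{y ∈ α^{-1}(x)} ρ(y)f(y) with ρ: X → [0,∞). If ρ(x₀) = 0 then ρ is continuous at x₀. -/
/-!
The fibre of `α` through `x₀` is finite, so by Urysohn there is `f : C(X, ℝ)` with values in
`[0, 1]`, equal to `1` at `x₀` and to `0` at the other points of that fibre. Positivity of the
summands gives `ρ x * f x ≤ (A f) (α x)` for every `x`, and the right-hand side is continuous in
`x` and vanishes at `x₀` because `ρ x₀ = 0`. Since `f` stays near `1` around `x₀`, this squeezes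
`ρ` to `0` at `x₀`.
-/

open Filter Topology Set

open scoped BigOperators

theorem single_le_finsum_mem {α : Type*} {s : Set α} {g : α → ℝ} {a : α} (hs : s.Finite)
    (hg : ∀ y ∈ s, 0 ≤ g y) (ha : a ∈ s) : g a ≤ ∑ᶠ y ∈ s, g y := by
  rw [← hs.coe_toFinset, finsum_mem_coe_finset]
  exact Finset.single_le_sum (fun y hy => hg y (hs.mem_toFinset.mp hy)) (hs.mem_toFinset.mpr ha)

theorem tendsto_nhds_zero_of_mul_le {ι : Type*} {l : Filter ι} {ρ f g : ι → ℝ} {c : ℝ}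
    (hc : 0 < c) (hf : Tendsto f l (𝓝 c)) (hg : Tendsto g l (𝓝 0)) (hρ : ∀ i, 0 ≤ ρ i)
    (hle : ∀ i, ρ i * f i ≤ g i) : Tendsto ρ l (𝓝 0) := by
  have hf_pos : ∀ᶠ i in l, 0 < f i := hf.eventually_const_lt hc
  have hρf : Tendsto (fun i => ρ i * f i) l (𝓝 0) :=
    tendsto_of_tendsto_of_tendsto_of_le_of_le' tendsto_const_nhds hg
      (hf_pos.mono fun i hi => mul_nonneg (hρ i) hi.le) (Eventually.of_forall hle)
  have hquot := hρf.div hf hc.ne'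
  rw [zero_div] at hquot
  refine hquot.congr' (hf_pos.mono fun i hi => ?_)
  exact mul_div_cancel_right₀ (ρ i) hi.ne'

theorem cocycle_continuousAt_of_zero
    {X : Type*} [TopologicalSpace X] [CompactSpace X] [T2Space X]
    (α : X → X) (hα : Continuous α)
    (hfin : ∃ N : ℕ, ∀ x : X, (α ⁻¹' {x}).Finite ∧ Nat.card ↥(α ⁻¹' {x}) ≤ N)
    (ρ : X → ℝ) (hρ : ∀ y : X, 0 ≤ ρ y)
    (A : C(X, ℝ) →ₗ[ℝ] C(X, ℝ))
    (hA : ∀ (f : C(X, ℝ)) (x : X), A f x = ∑ᶠ y ∈ α ⁻¹' {x}, ρ y * f y)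
    (x₀ : X) (h0 : ρ x₀ = 0) :
    ContinuousAt ρ x₀ := by
  obtain ⟨N, hN⟩ := hfin
  set S : Set X := α ⁻¹' {α x₀} \ {x₀}
  have hS : IsClosed S := ((hN (α x₀)).1.subset sdiff_subset).isClosed
  obtain ⟨f, hf0, hf1, hf_mem⟩ := exists_continuous_zero_one_of_isClosed hS isClosed_singleton
    (disjoint_singleton_right.mpr fun h => h.2 rfl)
  have hle : ∀ x, ρ x * f x ≤ A f (α x) := fun x => by
    rw [hA]
    exact single_le_finsum_mem (hN (α x)).1 (fun y _ => mul_nonneg (hρ y) (hf_mem y).1) rfl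
  have hAf_zero : A f (α x₀) = 0 := by
    rw [hA]
    refine finsum_mem_eq_zero_of_forall_eq_zero fun y hy => ?_
    by_cases hyx : y = x₀
    · rw [hyx, h0, zero_mul]
    · rw [hf0 ⟨hy, hyx⟩, Pi.zero_apply, mul_zero]
  have hf : Tendsto f (𝓝 x₀) (𝓝 1) := by
    simpa [hf1 (mem_singleton x₀)] using f.continuous.tendsto x₀
  have hg : Tendsto (fun x => A f (α x)) (𝓝 x₀) (𝓝 0) :=
    hAf_zero ▸ ((A f).continuous.comp hα).tendsto x₀
  rw [ContinuousAt, h0]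
  exact tendsto_nhds_zero_of_mul_le one_pos hf hg hρ hle
end

section
/- Let X be a compact Hausdorff space, α: X → X continuous with sup_x |α^{-1}(x)| < ∞, and A: C(X) → C(X) a transfer operator of the form [Af](x) = Σ_{y∈α^{-1}(x)} ρ(y)f(y) with ρ ≥ 0. If ρ(x₀) ≠ 0, then ρ is continuous at x₀ if and only if x₀ is a local injectivity point of α (there exists a neighborhood U of x₀ on which α is injective). -/
/-!
Test the transfer operator against an Urysohn bump `f` that is `1` near `x₀` and vanishes off a
neighbourhood `V` of `x₀`. If `α` is injective on `V`, then `(A f)(α x) = ρ x` for `x` near `x₀`,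
so `ρ` agrees near `x₀` with the continuous function `A f ∘ α`. Conversely, choose `V` meeting
the fibre of `α x₀` only in `x₀`, so that `(A f)(α x₀) = ρ x₀`. Two distinct points `u, v` near
`x₀` with `α u = α v` would give `(A f)(α u) ≥ ρ u + ρ v`, which is close to `2 ρ x₀` when `ρ` is
continuous at `x₀`; since `ρ x₀ > 0` this contradicts the continuity of `A f ∘ α`.
-/

open Topology Set Filter

theorem finsum_mem_eq_single {ι M : Type*} [AddCommMonoid M] {s : Set ι} {g : ι → M}
    {i : ι} (hi : i ∈ s) (hg : ∀ j ∈ s, j ≠ i → g j = 0) : ∑ᶠ j ∈ s, g j = g i := by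
  rw [finsum_mem_inter_support_eq' g s {i} fun j hj ↦ ⟨fun hjs ↦ by_contra fun hji ↦ hj
    (hg j hjs hji), fun hji ↦ hji ▸ hi⟩, finsum_mem_singleton]

theorem add_le_finsum_mem_of_nonneg {ι : Type*} {s : Set ι} (hs : s.Finite) {g : ι → ℝ}
    (hg : ∀ j, 0 ≤ g j) {i j : ι} (hi : i ∈ s) (hj : j ∈ s) (hij : i ≠ j) :
    g i + g j ≤ ∑ᶠ k ∈ s, g k := by
  classical
  rw [finsum_mem_eq_finite_toFinset_sum g hs, ← Finset.sum_pair hij]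
  refine Finset.sum_le_sum_of_subset_of_nonneg ?_ fun k _ _ ↦ hg k
  intro k hk
  rcases Finset.mem_insert.mp hk with rfl | hk
  · exact hs.mem_toFinset.mpr hi
  · exact hs.mem_toFinset.mpr (Finset.mem_singleton.mp hk ▸ hj)

theorem exists_continuousMap_eq_zero_off_eventuallyEq_one {X : Type*} [TopologicalSpace X]
    [T4Space X] {x₀ : X} {V : Set X} (hV : V ∈ 𝓝 x₀) :
    ∃ f : C(X, ℝ), (∀ y ∉ V, f y = 0) ∧ (∀ᶠ y in 𝓝 x₀, f y = 1) ∧ ∀ y, 0 ≤ f y := by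
  obtain ⟨C, hC, hC_closed, hCV⟩ := exists_mem_nhds_isClosed_subset (interior_mem_nhds.mpr hV)
  obtain ⟨f, hf0, hf1, hf01⟩ := exists_continuous_zero_one_of_isClosed
    isOpen_interior.isClosed_compl hC_closed (disjoint_compl_left_iff_subset.mpr hCV)
  exact ⟨f, fun y hy ↦ hf0 fun hyV ↦ hy (interior_subset hyV),
    Filter.mem_of_superset hC fun y hy ↦ hf1 hy, fun y ↦ (hf01 y).1⟩

section Transfer

variable {X : Type*} {α : X → X} {ρ : X → ℝ}

noncomputable def transferSum (α : X → X) (ρ : X → ℝ) (f : X → ℝ) (x : X) : ℝ :=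
  ∑ᶠ y ∈ α ⁻¹' {x}, ρ y * f y

theorem transferSum_apply_eq_single {f : X → ℝ} {x : X}
    (hf : ∀ y, α y = α x → y ≠ x → f y = 0) : transferSum α ρ f (α x) = ρ x * f x :=
  finsum_mem_eq_single rfl fun y hy hyx ↦ by rw [hf y hy hyx, mul_zero]

theorem transferSum_apply_eq_of_injOn {f : X → ℝ} {U : Set X} (hinj : InjOn α U)
    (hf : ∀ y ∉ U, f y = 0) {x : X} (hx : x ∈ U) : transferSum α ρ f (α x) = ρ x * f x :=
  transferSum_apply_eq_single fun y hy hyx ↦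
    hf y fun hyU ↦ hyx (hinj hyU hx hy)

theorem add_le_transferSum (hρ : ∀ y, 0 ≤ ρ y) {f : X → ℝ} (hf : ∀ y, 0 ≤ f y)
    {u v : X} (hfin : (α ⁻¹' {α u}).Finite) (huv : u ≠ v) (hαuv : α u = α v) :
    ρ u * f u + ρ v * f v ≤ transferSum α ρ f (α u) :=
  add_le_finsum_mem_of_nonneg hfin (fun y ↦ mul_nonneg (hρ y) (hf y)) rfl hαuv.symm huv

variable [TopologicalSpace X] [T4Space X] {x₀ : X}

theorem continuousAt_of_injOn (hT : ∀ f : C(X, ℝ), Continuous (transferSum α ρ f ∘ α))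
    {U : Set X} (hU : U ∈ 𝓝 x₀) (hinj : InjOn α U) : ContinuousAt ρ x₀ := by
  obtain ⟨f, hf0, hf1, -⟩ := exists_continuousMap_eq_zero_off_eventuallyEq_one hU
  refine (hT f).continuousAt.congr ?_
  filter_upwards [hf1, hU] with x hfx hxU
  simp [transferSum_apply_eq_of_injOn hinj hf0 hxU, hfx]

theorem exists_mem_nhds_injOn_of_continuousAt
    (hT : ∀ f : C(X, ℝ), Continuous (transferSum α ρ f ∘ α)) (hρ : ∀ y, 0 ≤ ρ y)
    (hfin : ∀ x, (α ⁻¹' {x}).Finite) (hpos : 0 < ρ x₀) (hcont : ContinuousAt ρ x₀) :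
    ∃ U ∈ 𝓝 x₀, InjOn α U := by
  have hV : (α ⁻¹' {α x₀} \ {x₀})ᶜ ∈ 𝓝 x₀ :=
    ((hfin _).sdiff.isClosed.isOpen_compl).mem_nhds fun h ↦ h.2 rfl
  obtain ⟨f, hf0, hf1, hf_nonneg⟩ := exists_continuousMap_eq_zero_off_eventuallyEq_one hV
  have hT_x₀ : transferSum α ρ f (α x₀) = ρ x₀ := by
    rw [transferSum_apply_eq_single fun y hy hyx ↦ hf0 y (not_not.mpr ⟨hy, hyx⟩),
      hf1.self_of_nhds, mul_one]
  have hT_lt : ∀ᶠ x in 𝓝 x₀, transferSum α ρ f (α x) < 3 / 2 * ρ x₀ :=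
    (hT f).continuousAt.eventually_lt_const (by simp only [Function.comp, hT_x₀]; linarith)
  have hρ_gt : ∀ᶠ x in 𝓝 x₀, 3 / 4 * ρ x₀ < ρ x := hcont.eventually_const_lt (by linarith)
  refine ⟨_, hT_lt.and (hρ_gt.and hf1), fun u hu v hv hαuv ↦ by_contra fun huv ↦ ?_⟩
  have := add_le_transferSum hρ hf_nonneg (hfin _) huv hαuv
  rw [hu.2.2, hv.2.2] at this
  linarith [hu.1, hu.2.1, hv.2.1]

end Transfer

theorem cocycle_continuousAt_iff_local_injectivity
    {X : Type*} [TopologicalSpace X] [CompactSpace X] [T2Space X]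
    (α : X → X) (hα : Continuous α)
    (hfin : ∃ N : ℕ, ∀ x : X, (α ⁻¹' {x}).Finite ∧ Nat.card ↥(α ⁻¹' {x}) ≤ N)
    (ρ : X → ℝ) (hρ : ∀ y : X, 0 ≤ ρ y)
    (A : C(X, ℝ) →ₗ[ℝ] C(X, ℝ))
    (hA : ∀ (f : C(X, ℝ)) (x : X), A f x = ∑ᶠ y ∈ α ⁻¹' {x}, ρ y * f y)
    (x₀ : X) (h0 : ρ x₀ ≠ 0) :
    ContinuousAt ρ x₀ ↔ ∃ U ∈ 𝓝 x₀, Set.InjOn α U := by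
  have hT (f : C(X, ℝ)) : Continuous (transferSum α ρ f ∘ α) := by
    have : transferSum α ρ f = A f := funext fun x ↦ (hA f x).symm
    exact this ▸ (A f).continuous.comp hα
  obtain ⟨N, hfin⟩ := hfin
  refine ⟨exists_mem_nhds_injOn_of_continuousAt hT hρ (fun x ↦ (hfin x).1)
    ((hρ x₀).lt_of_ne' h0), fun ⟨U, hU, hinj⟩ ↦ continuousAt_of_injOn hT hU hinj⟩
end

section
/- Let X be a compact Hausdorff space, α: X → X continuous with sup_x |α^{-1}(x)| < ∞, and A: C(X) → C(X) a transfer operator of the form [Af](x) = Σ_{y∈α^{-1}(x)} ρ(y)f(y) with ρ ≥ 0. If ρ(x₀) ≠ 0 then x₀ is a local openness point: for any neighborhood U of x₀, the image α(U) contains a neighborhood of α(x₀). -/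
/-!
Choose a Urysohn function `f` with `f x₀ = 1` that vanishes outside a given neighbourhood `U` of
`x₀` and at the finitely many other points of the fibre `α ⁻¹' {α x₀}`. Then `A f (α x₀) = ρ x₀ ≠ 0`,
so `A f` is nonzero on a neighbourhood of `α x₀`; and wherever `A f x ≠ 0`, some `y` with
`α y = x` has `f y ≠ 0`, hence `y ∈ U` and `x ∈ α '' U`.
-/

open Topology Function Set

theorem finsum_mem_eq_of_eqOn_zero {ι M : Type*} [AddCommMonoid M] {g : ι → M} {s : Set ι}
    {a : ι} (ha : a ∈ s) (hg : EqOn g 0 (s \ {a})) : ∑ᶠ y ∈ s, g y = g a := by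
  rw [finsum_mem_def, finsum_eq_single _ a fun y hy => ?_, indicator_of_mem ha]
  by_cases hys : y ∈ s
  · rw [indicator_of_mem hys]
    exact hg ⟨hys, hy⟩
  · exact indicator_of_notMem hys g

theorem mem_image_support_of_finsum_mem_preimage_ne_zero {ι X M : Type*} [AddCommMonoid M]
    {α : ι → X} {g : ι → M} {x : X} (h : ∑ᶠ y ∈ α ⁻¹' {x}, g y ≠ 0) : x ∈ α '' support g := by
  obtain ⟨y, hy, hgy⟩ := exists_ne_zero_of_finsum_mem_ne_zero h
  exact ⟨y, hgy, hy⟩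

theorem exists_continuousMap_eq_one_support_subset_eqOn_zero {X : Type*} [TopologicalSpace X]
    [RegularSpace X] [LocallyCompactSpace X] {x₀ : X} {V t : Set X} (hV : IsOpen V)
    (hx₀V : x₀ ∈ V) (ht : IsClosed t) (hx₀t : x₀ ∉ t) :
    ∃ f : C(X, ℝ), f x₀ = 1 ∧ support f ⊆ V ∧ EqOn f 0 t := by
  have hdisj : Disjoint {x₀} (Vᶜ ∪ t) := by simp [hx₀V, hx₀t]
  obtain ⟨f, hf1, hf0, -, -⟩ :=
    exists_continuous_one_zero_of_isCompact isCompact_singleton (hV.isClosed_compl.union ht) hdisj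
  exact ⟨f, hf1 rfl, support_subset_iff'.mpr fun x hx => hf0 (.inl hx), hf0.mono subset_union_right⟩

theorem cocycle_nonzero_implies_local_openness_general
    {X : Type*} [TopologicalSpace X] [CompactSpace X] [T2Space X]
    (α : X → X)
    (hfin : ∃ N : ℕ, ∀ x : X, (α ⁻¹' {x}).Finite ∧ Nat.card ↥(α ⁻¹' {x}) ≤ N)
    (ρ : X → ℝ)
    (A : C(X, ℝ) →ₗ[ℝ] C(X, ℝ))
    (hA : ∀ (f : C(X, ℝ)) (x : X), A f x = ∑ᶠ y ∈ α ⁻¹' {x}, ρ y * f y)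
    (x₀ : X) (h0 : ρ x₀ ≠ 0) :
    ∀ U ∈ 𝓝 x₀, α '' U ∈ 𝓝 (α x₀) := by
  intro U hU
  obtain ⟨V, hVU, hV, hx₀V⟩ := mem_nhds_iff.mp hU
  obtain ⟨N, hN⟩ := hfin
  have hF : IsClosed (α ⁻¹' {α x₀} \ {x₀}) := ((hN (α x₀)).1.subset sdiff_subset).isClosed
  obtain ⟨f, hf1, hfV, hfF⟩ :=
    exists_continuousMap_eq_one_support_subset_eqOn_zero hV hx₀V hF fun h => h.2 rfl
  have hAf : A f (α x₀) = ρ x₀ := by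
    have hρf : EqOn (fun y => ρ y * f y) 0 (α ⁻¹' {α x₀} \ {x₀}) := fun y hy => by simp [hfF hy]
    rw [hA, finsum_mem_eq_of_eqOn_zero (by simp) hρf, hf1, mul_one]
  have hsub : {x | A f x ≠ 0} ⊆ α '' U := fun x hx =>
    image_mono ((support_mul_subset_right ρ f).trans (hfV.trans hVU))
      (mem_image_support_of_finsum_mem_preimage_ne_zero (hA f x ▸ hx))
  exact Filter.mem_of_superset
    ((isOpen_ne_fun (A f).continuous continuous_const).mem_nhds (hAf.trans_ne h0)) hsub

theorem cocycle_nonzero_implies_local_openness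
    {X : Type*} [TopologicalSpace X] [CompactSpace X] [T2Space X]
    (α : X → X) (hα : Continuous α)
    (hfin : ∃ N : ℕ, ∀ x : X, (α ⁻¹' {x}).Finite ∧ Nat.card ↥(α ⁻¹' {x}) ≤ N)
    (ρ : X → ℝ) (hρ : ∀ y : X, 0 ≤ ρ y)
    (A : C(X, ℝ) →ₗ[ℝ] C(X, ℝ))
    (hA : ∀ (f : C(X, ℝ)) (x : X), A f x = ∑ᶠ y ∈ α ⁻¹' {x}, ρ y * f y)
    (x₀ : X) (h0 : ρ x₀ ≠ 0) :
    ∀ U ∈ 𝓝 x₀, α '' U ∈ 𝓝 (α x₀) :=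
  cocycle_nonzero_implies_local_openness_general α hfin ρ A hA x₀ h0
end
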